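/- Let m be real with −2 ≤ m ≤ 2 and define the Curnier–Zysset scale function E : (0,∞) → ℝ by E(λ) := ((2+m)/8) λ² − ((2−m)/8) λ^{−2} − m/4. Then: (i) E(1) = 0; (ii) E'(1) = 1; (iii) E'(λ) > 0 for all λ > 0. Moreover, if −2 < m < 2, then E is coercive: E(λ) → +∞ as λ → ∞ and E(λ) → −∞ as λ → 0⁺. -/

import Mathlib

open Filter Topology

/-- The Curnier–Zysset scale function `E(λ) = ((2+m)/8) λ² − ((2−m)/8) λ^{−2} − m/4`. -/
noncomputable def CZscale (m : ℝ) (x : ℝ) : ℝ :=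
  (2 + m) / 8 * x ^ 2 - (2 - m) / 8 * x ^ (-2 : ℤ) - m / 4

/-!
The derivative `E'(λ) = ((2+m)/4) λ + ((2−m)/4) λ⁻³` is a convex combination of the positive
numbers `λ` and `λ⁻³`, hence positive, and equals `1` at `λ = 1`. For coercivity, the `λ²`
term dominates at infinity as soon as `m > −2`; the behaviour at `0⁺` is reduced to that at
infinity through the symmetry `E_m(λ⁻¹) = −E_{−m}(λ)`.
-/

lemma CZscale_one (m : ℝ) : CZscale m 1 = 0 := by
  simp only [CZscale, one_pow, one_zpow]
  ring

lemma CZscale_inv (m x : ℝ) : CZscale m x⁻¹ = -CZscale (-m) x := by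
  simp only [CZscale, zpow_neg, zpow_ofNat, inv_pow, inv_inv]
  ring

lemma hasDerivAt_CZscale (m : ℝ) {x : ℝ} (hx : x ≠ 0) :
    HasDerivAt (CZscale m) ((2 + m) / 4 * x + (2 - m) / 4 * x ^ (-3 : ℤ)) x := by
  have hsq := (hasDerivAt_pow 2 x).const_mul ((2 + m) / 8)
  have hinv := (hasDerivAt_zpow (-2) x (Or.inl hx)).const_mul ((2 - m) / 8)
  refine ((hsq.sub hinv).sub_const (m / 4)).congr_deriv ?_
  norm_num
  ring

lemma deriv_CZscale_pos {m : ℝ} (hm₁ : -2 ≤ m) (hm₂ : m ≤ 2) {x : ℝ} (hx : 0 < x) :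
    0 < deriv (CZscale m) x := by
  rw [(hasDerivAt_CZscale m hx.ne').deriv]
  have hcomb := convex_Ioi (0 : ℝ) hx (zpow_pos hx (-3)) (by linarith : 0 ≤ (2 + m) / 4)
    (by linarith : 0 ≤ (2 - m) / 4) (by ring)
  simpa using hcomb

lemma tendsto_CZscale_atTop {m : ℝ} (hm : -2 < m) : Tendsto (CZscale m) atTop atTop := by
  have hsq : Tendsto (fun x : ℝ => (2 + m) / 8 * x ^ 2) atTop atTop :=
    (tendsto_pow_atTop two_ne_zero).const_mul_atTop (by linarith)
  have hrest : Tendsto (fun x : ℝ => (2 - m) / 8 * x ^ (-2 : ℤ) + m / 4) atTop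
      (𝓝 ((2 - m) / 8 * 0 + m / 4)) :=
    ((tendsto_zpow_atTop_zero (by norm_num)).const_mul _).add_const _
  refine (hsq.atTop_add hrest.neg).congr fun x => ?_
  simp only [CZscale]
  ring

lemma tendsto_CZscale_nhdsGT_zero {m : ℝ} (hm : m < 2) :
    Tendsto (CZscale m) (𝓝[>] 0) atBot := by
  have hneg : Tendsto (fun x => -CZscale (-m) x⁻¹) (𝓝[>] 0) atBot :=
    tendsto_neg_atTop_atBot.comp
      ((tendsto_CZscale_atTop (by linarith : -2 < -m)).comp tendsto_inv_nhdsGT_zero)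
  refine hneg.congr fun x => ?_
  rw [← CZscale_inv, inv_inv]

/-- For `−2 ≤ m ≤ 2`, the Curnier–Zysset scale function vanishes at
`1` with derivative `1` there and has everywhere positive derivative on `(0,∞)`;
moreover, for `−2 < m < 2` it is coercive. -/
theorem CZscale_properties (m : ℝ) (hm₁ : -2 ≤ m) (hm₂ : m ≤ 2) :
    CZscale m 1 = 0 ∧
    deriv (CZscale m) 1 = 1 ∧
    (∀ x : ℝ, 0 < x → DifferentiableAt ℝ (CZscale m) x) ∧
    (∀ x : ℝ, 0 < x → 0 < deriv (CZscale m) x) ∧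
    (-2 < m → m < 2 →
      Tendsto (CZscale m) atTop atTop ∧ Tendsto (CZscale m) (𝓝[>] (0 : ℝ)) atBot) := by
  refine ⟨CZscale_one m, ?_, fun x hx => (hasDerivAt_CZscale m hx.ne').differentiableAt,
    fun x hx => deriv_CZscale_pos hm₁ hm₂ hx,
    fun h₁ h₂ => ⟨tendsto_CZscale_atTop h₁, tendsto_CZscale_nhdsGT_zero h₂⟩⟩
  rw [(hasDerivAt_CZscale m one_ne_zero).deriv]
  norm_num
  ring
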